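/- arXiv:1809.00932 — 10 statements merged into one kernel-verified Lean document; each statement's English description precedes it below -/
import Mathlib

section
/- Consider the system of linear equations and inequalities over nonnegative reals: for each nonempty subset T of {1,...,k}, Σ_{j∈T} x_T^j = n_T (where n_T are given nonnegative integers), and for each j ∈ {1,...,k}, L ≤ Σ_{T ∋ j} x_T^j ≤ U (where L ≤ U are nonnegative integers). If this system has a feasible real-valued solution, then it has a feasible solution in which all variables are nonnegative integers. -/
/-!
Record a real solution by its column loads `c j = ∑_{T ∋ j} x_T^j`, and let `a S` be the total
supply of the rows contained in `S`. The loads satisfy `L ≤ c ≤ U`, `c(univ) = a(univ)` and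
`a S ≤ c(S)` for every `S`; since `a` is supermodular, the sets on which the last inequality is
tight are closed under intersection. While some load is fractional, a minimal tight set
containing a fractional load contains a second one, and no tight set separates the two; moving
mass from one to the other until a load becomes integral or a new set becomes tight loses
neither integral loads nor tight sets, so the process ends at an integral load vector `d`.
Finally `a S ≤ d(S)` is exactly Hall's condition for matching `n_T` unit copies of each row `T`
into `d j` unit copies of the columns `j ∈ T`.
-/

open Finset

theorem Int.fract_eq_zero_of_sum_eq {ι R : Type*} [DecidableEq ι] [Ring R] [LinearOrder R]
    [IsStrictOrderedRing R] [FloorRing R] {s : Finset ι} {f : ι → R} {n : ℤ}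
    (h : ∑ j ∈ s, f j = n) {i : ι} (hi : i ∈ s) (hint : ∀ j ∈ s.erase i, Int.fract (f j) = 0) :
    Int.fract (f i) = 0 := by
  have hfract : ∀ x : R, Int.fract x = 0 ↔ x ∈ (Int.castAddHom R).range := fun x => by
    rw [Int.fract_eq_zero_iff]; rfl
  rw [← add_sum_erase _ _ hi, ← eq_sub_iff_add_eq] at h
  rw [hfract, h]
  exact sub_mem ⟨n, rfl⟩ (sum_mem fun j hj => (hfract _).1 (hint j hj))

variable {ι : Type*} [DecidableEq ι]

def IsSupermodular (a : Finset ι → ℕ) : Prop := ∀ A B, a A + a B ≤ a (A ∪ B) + a (A ∩ B)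

def supplyWithin (m : Finset ι → ℕ) (S : Finset ι) : ℕ := ∑ T ∈ S.powerset, m T

theorem isSupermodular_supplyWithin (m : Finset ι → ℕ) : IsSupermodular (supplyWithin m) := by
  intro A B
  have hinter : A.powerset ∩ B.powerset = (A ∩ B).powerset := by
    ext T; simp only [mem_inter, mem_powerset, subset_inter_iff]
  unfold supplyWithin
  rw [← sum_union_inter, hinter]
  gcongr
  exact union_subset (powerset_mono.2 subset_union_left) (powerset_mono.2 subset_union_right)

def IsTight (a : Finset ι → ℕ) (c : ι → ℝ) (S : Finset ι) : Prop := ∑ j ∈ S, c j = a S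

theorem IsTight.inter {a : Finset ι → ℕ} {c : ι → ℝ} (ha : IsSupermodular a)
    (hle : ∀ S, (a S : ℝ) ≤ ∑ j ∈ S, c j) {A B : Finset ι} (hA : IsTight a c A)
    (hB : IsTight a c B) : IsTight a c (A ∩ B) := by
  have hsuper : (a A + a B : ℝ) ≤ a (A ∪ B) + a (A ∩ B) := by exact_mod_cast ha A B
  have hmod : ∑ j ∈ A ∪ B, c j + ∑ j ∈ A ∩ B, c j = ∑ j ∈ A, c j + ∑ j ∈ B, c j :=
    sum_union_inter
  have := hle (A ∪ B)
  have := hle (A ∩ B)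
  unfold IsTight at *
  linarith

def transfer (c : ι → ℝ) (j₁ j₂ : ι) (ε : ℝ) : ι → ℝ := c + Pi.single j₁ ε - Pi.single j₂ ε

theorem sum_transfer (c : ι → ℝ) (j₁ j₂ : ι) (ε : ℝ) (S : Finset ι) :
    ∑ j ∈ S, transfer c j₁ j₂ ε j =
      ∑ j ∈ S, c j + (if j₁ ∈ S then ε else 0) - (if j₂ ∈ S then ε else 0) := by
  simp only [transfer, Pi.add_apply, Pi.sub_apply, sum_add_distrib, sum_sub_distrib,
    sum_pi_single']

theorem isTight_transfer {a : Finset ι → ℕ} {c : ι → ℝ} {S : Finset ι} (hS : IsTight a c S)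
    {j₁ j₂ : ι} (h : j₁ ∈ S ↔ j₂ ∈ S) (ε : ℝ) : IsTight a (transfer c j₁ j₂ ε) S := by
  rw [IsTight, sum_transfer, hS]
  by_cases h₁ : j₁ ∈ S <;> simp [h₁, ← h]

variable [Fintype ι]

def load {M : Type*} [AddCommMonoid M] (x : Finset ι → ι → M) (j : ι) : M :=
  ∑ T, if j ∈ T then x T j else 0

theorem sum_load {M : Type*} [AddCommMonoid M] (x : Finset ι → ι → M) (S : Finset ι) :
    ∑ j ∈ S, load x j = ∑ T, ∑ j ∈ S ∩ T, x T j := by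
  unfold load
  rw [sum_comm]
  simp only [sum_ite_mem]

theorem sum_univ_load {M : Type*} [AddCommMonoidWithOne M] {m : Finset ι → ℕ}
    {x : Finset ι → ι → M} (hrow : ∀ T, ∑ j ∈ T, x T j = m T) :
    ∑ j, load x j = supplyWithin m univ := by
  simp [sum_load, hrow, supplyWithin]

/-- `c` lies in the base polytope of `a`, cut by the box `[l, u]`. -/
structure InBase (a : Finset ι → ℕ) (l u : ι → ℕ) (c : ι → ℝ) : Prop where
  mem_box : ∀ j, (l j : ℝ) ≤ c j ∧ c j ≤ u j
  sum_univ : ∑ j, c j = a univ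
  le_sum : ∀ S, (a S : ℝ) ≤ ∑ j ∈ S, c j

theorem inBase_load {m : Finset ι → ℕ} {l u : ι → ℕ} {x : Finset ι → ι → ℝ}
    (hx : ∀ T j, 0 ≤ x T j) (hrow : ∀ T, ∑ j ∈ T, x T j = m T)
    (hbox : ∀ j, (l j : ℝ) ≤ load x j ∧ load x j ≤ u j) :
    InBase (supplyWithin m) l u (load x) where
  mem_box := hbox
  sum_univ := sum_univ_load hrow
  le_sum S := by
    rw [sum_load, supplyWithin, Nat.cast_sum]
    calc ∑ T ∈ S.powerset, (m T : ℝ) = ∑ T ∈ S.powerset, ∑ j ∈ S ∩ T, x T j :=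
          sum_congr rfl fun T hT => by rw [inter_eq_right.2 (mem_powerset.1 hT), hrow]
      _ ≤ ∑ T, ∑ j ∈ S ∩ T, x T j :=
          sum_le_sum_of_subset_of_nonneg (subset_univ _) fun T _ _ =>
            sum_nonneg fun j _ => hx T j

open scoped Classical in
noncomputable def fractionalCoords (c : ι → ℝ) : Finset ι := {j | Int.fract (c j) ≠ 0}

open scoped Classical in
noncomputable def looseSets (a : Finset ι → ℕ) (c : ι → ℝ) : Finset (Finset ι) :=
  {S | ¬IsTight a c S}

section Rounding

variable {a : Finset ι → ℕ} {l u : ι → ℕ} {c : ι → ℝ}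

theorem exists_fractional_pair (ha : IsSupermodular a) (hc : InBase a l u c) {j : ι}
    (hj : Int.fract (c j) ≠ 0) :
    ∃ j₁ j₂, j₁ ≠ j₂ ∧ Int.fract (c j₁) ≠ 0 ∧ Int.fract (c j₂) ≠ 0 ∧
      ∀ S, IsTight a c S → (j₁ ∈ S ↔ j₂ ∈ S) := by
  obtain ⟨S₀, ⟨hS₀, j₂, hj₂S₀, hj₂⟩, hmin⟩ := exists_minimal_of_wellFoundedLT
    (fun S => IsTight a c S ∧ ∃ j ∈ S, Int.fract (c j) ≠ 0) ⟨univ, hc.sum_univ, j, mem_univ j, hj⟩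
  have hsub : ∀ S, IsTight a c S → ∀ j ∈ S ∩ S₀, Int.fract (c j) ≠ 0 → S₀ ⊆ S :=
    fun S hS j hj hfj =>
      (hmin ⟨hS.inter ha hc.le_sum hS₀, j, hj, hfj⟩ inter_subset_right).trans inter_subset_left
  obtain ⟨j₁, hj₁, hfj₁⟩ : ∃ j₁ ∈ S₀.erase j₂, Int.fract (c j₁) ≠ 0 := by
    by_contra! hint
    exact hj₂ (Int.fract_eq_zero_of_sum_eq (n := a S₀) hS₀ hj₂S₀ hint)
  refine ⟨j₁, j₂, ne_of_mem_erase hj₁, hfj₁, hj₂, fun S hS => ⟨fun h => ?_, fun h => ?_⟩⟩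
  · exact hsub S hS j₁ (mem_inter.2 ⟨h, mem_of_mem_erase hj₁⟩) hfj₁ hj₂S₀
  · exact hsub S hS j₂ (mem_inter.2 ⟨h, hj₂S₀⟩) hj₂ (mem_of_mem_erase hj₁)

theorem inBase_transfer (hc : InBase a l u c) {j₁ j₂ : ι} {ε : ℝ} (hε : 0 ≤ ε)
    (h₁ : c j₁ + ε ≤ u j₁) (h₂ : l j₂ ≤ c j₂ - ε)
    (hslack : ∀ S, j₂ ∈ S → j₁ ∉ S → ε ≤ ∑ j ∈ S, c j - a S) :
    InBase a l u (transfer c j₁ j₂ ε) where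
  mem_box j := by
    have := hc.mem_box j
    simp only [transfer, Pi.add_apply, Pi.sub_apply, Pi.single_apply]
    split_ifs <;> subst_vars <;> constructor <;> linarith
  sum_univ := by simp [sum_transfer, hc.sum_univ]
  le_sum S := by
    have := hc.le_sum S
    rw [sum_transfer]
    by_cases h₁ : j₁ ∈ S <;> by_cases h₂ : j₂ ∈ S <;> simp only [h₁, h₂, if_true, if_false]
    · linarith
    · linarith
    · linarith [hslack S h₂ h₁]
    · linarith

/-- The step `ε` is the largest one that neither overshoots the integers nearest to `c j₁` and
`c j₂` nor the slack of a set containing `j₂` but not `j₁`; one of these bounds is attained. -/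
theorem exists_transfer_step (hc : InBase a l u c) {j₁ j₂ : ι} (hj₁ : Int.fract (c j₁) ≠ 0)
    (hj₂ : Int.fract (c j₂) ≠ 0) (hpair : ∀ S, IsTight a c S → (j₁ ∈ S ↔ j₂ ∈ S)) :
    ∃ ε, InBase a l u (transfer c j₁ j₂ ε) ∧
      (ε = ⌈c j₁⌉ - c j₁ ∨ ε = c j₂ - ⌊c j₂⌋ ∨
        ∃ S, j₂ ∈ S ∧ j₁ ∉ S ∧ ε = ∑ j ∈ S, c j - a S) := by
  set E : Finset ℝ := insert (⌈c j₁⌉ - c j₁) (insert (c j₂ - ⌊c j₂⌋)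
    (({S | j₂ ∈ S ∧ j₁ ∉ S} : Finset (Finset ι)).image fun S => ∑ j ∈ S, c j - a S))
  have hmem : ∀ e ∈ E, e = ⌈c j₁⌉ - c j₁ ∨ e = c j₂ - ⌊c j₂⌋ ∨
      ∃ S, j₂ ∈ S ∧ j₁ ∉ S ∧ e = ∑ j ∈ S, c j - a S := by
    intro e he
    rcases mem_insert.1 he with he | he
    · exact .inl he
    rcases mem_insert.1 he with he | he
    · exact .inr (.inl he)
    obtain ⟨S, hS, rfl⟩ := mem_image.1 he
    simp only [mem_filter, mem_univ, true_and] at hS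
    exact .inr (.inr ⟨S, hS.1, hS.2, rfl⟩)
  have hpos : ∀ e ∈ E, 0 < e := by
    intro e he
    rcases hmem e he with rfl | rfl | ⟨S, h₂, h₁, rfl⟩
    · linarith [Int.ceil_sub_self_eq hj₁, Int.fract_lt_one (c j₁)]
    · exact Int.self_sub_floor (c j₂) ▸ (Int.fract_nonneg _).lt_of_ne' hj₂
    · exact sub_pos.2 ((hc.le_sum S).lt_of_ne fun h => h₁ ((hpair S h.symm).2 h₂))
  set ε := E.min' (insert_nonempty _ _)
  have hεE : ∀ e ∈ E, ε ≤ e := fun e he => E.min'_le e he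
  have hceil : (⌈c j₁⌉ : ℝ) ≤ u j₁ := by
    exact_mod_cast Int.ceil_le.2 (by exact_mod_cast (hc.mem_box j₁).2)
  have hfloor : (l j₂ : ℝ) ≤ ⌊c j₂⌋ := by
    exact_mod_cast Int.le_floor.2 (by exact_mod_cast (hc.mem_box j₂).1)
  refine ⟨ε, inBase_transfer hc (hpos ε (E.min'_mem _)).le
    (by linarith [hεE _ (mem_insert_self _ _)])
    (by linarith [hεE _ (mem_insert_of_mem (mem_insert_self _ _))])
    fun S h₂ h₁ => hεE _ (mem_insert_of_mem (mem_insert_of_mem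
      (mem_image_of_mem _ (by simp [h₂, h₁])))), hmem ε (E.min'_mem _)⟩

theorem exists_inBase_card_lt (ha : IsSupermodular a) (hc : InBase a l u c) {j : ι}
    (hj : Int.fract (c j) ≠ 0) :
    ∃ c', InBase a l u c' ∧
      #(fractionalCoords c') + #(looseSets a c') < #(fractionalCoords c) + #(looseSets a c) := by
  obtain ⟨j₁, j₂, hne, hj₁, hj₂, hpair⟩ := exists_fractional_pair ha hc hj
  obtain ⟨ε, hc', hε⟩ := exists_transfer_step hc hj₁ hj₂ hpair
  refine ⟨_, hc', ?_⟩
  have hfrac : fractionalCoords (transfer c j₁ j₂ ε) ⊆ fractionalCoords c := by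
    intro j
    simp only [fractionalCoords, mem_filter, mem_univ, true_and]
    rcases eq_or_ne j j₁ with rfl | h₁
    · exact fun _ => hj₁
    rcases eq_or_ne j j₂ with rfl | h₂
    · exact fun _ => hj₂
    simp [transfer, h₁, h₂]
  have hloose : looseSets a (transfer c j₁ j₂ ε) ⊆ looseSets a c := by
    intro S
    simp only [looseSets, mem_filter, mem_univ, true_and, not_imp_not]
    exact fun hS => isTight_transfer hS (hpair S hS) ε
  have hlt : fractionalCoords (transfer c j₁ j₂ ε) ⊂ fractionalCoords c ∨
      looseSets a (transfer c j₁ j₂ ε) ⊂ looseSets a c := by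
    rcases hε with hε | hε | ⟨S, h₂, h₁, hε⟩
    · refine .inl ((ssubset_iff_of_subset hfrac).2 ⟨j₁, by simpa [fractionalCoords], ?_⟩)
      simp [fractionalCoords, transfer, hne, hε]
    · refine .inl ((ssubset_iff_of_subset hfrac).2 ⟨j₂, by simpa [fractionalCoords], ?_⟩)
      simp [fractionalCoords, transfer, hne.symm, hε]
    · refine .inr ((ssubset_iff_of_subset hloose).2 ⟨S, ?_, ?_⟩)
      · simpa [looseSets] using fun h => h₁ ((hpair S h).2 h₂)
      · simp only [looseSets, mem_filter, mem_univ, true_and, not_not]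
        rw [IsTight, sum_transfer]
        simp only [h₁, h₂, if_true, if_false]
        linarith
  rcases hlt with h | h
  · have := card_lt_card h; have := card_le_card hloose; omega
  · have := card_lt_card h; have := card_le_card hfrac; omega

theorem exists_nat_inBase (ha : IsSupermodular a) (hc : InBase a l u c) :
    ∃ d : ι → ℕ, InBase a l u fun j => (d j : ℝ) := by
  induction hN : #(fractionalCoords c) + #(looseSets a c) using Nat.strong_induction_on
    generalizing c with
  | _ N ih =>
  by_cases hfrac : ∃ j, Int.fract (c j) ≠ 0
  · obtain ⟨j, hj⟩ := hfrac
    obtain ⟨c', hc', hlt⟩ := exists_inBase_card_lt ha hc hj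
    exact ih _ (hN ▸ hlt) hc' rfl
  push Not at hfrac
  refine ⟨fun j => ⌊c j⌋₊, ?_⟩
  have hcast : (fun j => (⌊c j⌋₊ : ℝ)) = c := funext fun j => by
    rw [← Int.cast_natCast,
      Int.natCast_floor_eq_floor ((Nat.cast_nonneg _).trans (hc.mem_box j).1)]
    linarith [Int.self_sub_floor (c j), hfrac j]
  rwa [hcast]

end Rounding

/-- Hall's theorem, applied to `m T` unit copies of each row `T` and `d j` unit copies of each
column `j`. -/
theorem exists_transport_of_supplyWithin_le (m : Finset ι → ℕ) (d : ι → ℕ)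
    (hsum : ∑ j, d j = supplyWithin m univ) (hle : ∀ S, supplyWithin m S ≤ ∑ j ∈ S, d j) :
    ∃ y : Finset ι → ι → ℕ, (∀ T, ∑ j ∈ T, y T j = m T) ∧ ∀ j, load y j = d j := by
  let t : (Σ T : Finset ι, Fin (m T)) → Finset (Σ j : ι, Fin (d j)) := fun x => {p | p.1 ∈ x.1}
  obtain ⟨f, hinj, hft⟩ := (all_card_le_biUnion_card_iff_exists_injective t).1 fun s => by
    let S := s.biUnion Sigma.fst
    calc #s ≤ #(S.powerset.sigma fun T => (univ : Finset (Fin (m T)))) :=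
          card_le_card fun x hx =>
            mem_sigma.2 ⟨mem_powerset.2 (subset_biUnion_of_mem _ hx), mem_univ _⟩
      _ = supplyWithin m S := by simp [card_sigma, supplyWithin]
      _ ≤ ∑ j ∈ S, d j := hle S
      _ = #(S.sigma fun j => (univ : Finset (Fin (d j)))) := by simp [card_sigma]
      _ ≤ #(s.biUnion t) := card_le_card fun p hp => by
          simp only [mem_sigma, mem_biUnion, S, t, mem_filter, mem_univ, true_and] at hp ⊢
          exact hp.1
  have hf : ∀ x, (f x).1 ∈ x.1 := fun x => by simpa [t] using hft x
  let y : Finset ι → ι → ℕ := fun T j => #{i : Fin (m T) | (f ⟨T, i⟩).1 = j}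
  have hrow : ∀ T, ∑ j ∈ T, y T j = m T := fun T => by
    rw [← card_eq_sum_card_fiberwise fun i _ => hf ⟨T, i⟩, card_univ, Fintype.card_fin]
  have hcol : ∀ j, load y j ≤ d j := fun j => calc
    load y j ≤ ∑ T, y T j := sum_le_sum fun T _ => by split_ifs <;> simp
    _ = #(univ.sigma fun T => ({i | (f ⟨T, i⟩).1 = j} : Finset (Fin (m T)))) := by
        rw [card_sigma]
    _ ≤ #(({j} : Finset ι).sigma fun j => (univ : Finset (Fin (d j)))) :=
        card_le_card_of_injOn f (fun x hx => by simpa using hx) hinj.injOn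
    _ = d j := by simp [card_sigma]
  refine ⟨y, hrow, fun j => (sum_eq_sum_iff_of_le fun j _ => hcol j).1 ?_ j (mem_univ j)⟩
  rw [sum_univ_load hrow, Nat.cast_id, hsum]

theorem stmt1_general {k : ℕ} (n : Finset (Fin k) → ℕ) (L U : ℕ)
    (hreal : ∃ x : Finset (Fin k) → Fin k → ℝ,
      (∀ T j, 0 ≤ x T j) ∧
      (∀ T : Finset (Fin k), T.Nonempty → ∑ j ∈ T, x T j = (n T : ℝ)) ∧
      (∀ j : Fin k,
        (L : ℝ) ≤ ∑ T : Finset (Fin k), (if j ∈ T then x T j else 0) ∧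
        ∑ T : Finset (Fin k), (if j ∈ T then x T j else 0) ≤ (U : ℝ))) :
    ∃ y : Finset (Fin k) → Fin k → ℕ,
      (∀ T : Finset (Fin k), T.Nonempty → ∑ j ∈ T, y T j = n T) ∧
      (∀ j : Fin k,
        L ≤ ∑ T : Finset (Fin k), (if j ∈ T then y T j else 0) ∧
        ∑ T : Finset (Fin k), (if j ∈ T then y T j else 0) ≤ U) := by
  obtain ⟨x, hx, hrow, hcol⟩ := hreal
  let m : Finset (Fin k) → ℕ := fun T => if T.Nonempty then n T else 0
  have hrow' : ∀ T, ∑ j ∈ T, x T j = m T := fun T => by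
    rcases T.eq_empty_or_nonempty with rfl | hT
    · simp [m]
    · simp [m, hT, hrow T hT]
  obtain ⟨d, hd⟩ := exists_nat_inBase (isSupermodular_supplyWithin m)
    (inBase_load (l := fun _ => L) (u := fun _ => U) hx hrow' hcol)
  obtain ⟨y, hyrow, hycol⟩ := exists_transport_of_supplyWithin_le m d
    (by exact_mod_cast hd.sum_univ) fun S => by exact_mod_cast hd.le_sum S
  refine ⟨y, fun T hT => by simp [hyrow, m, hT], fun j => ?_⟩
  rw [← load, hycol]
  exact_mod_cast hd.mem_box j

/-- if the system `∑_{j∈T} x_T^j = n_T`, `L ≤ ∑_{T∋j} x_T^j ≤ U` has a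
feasible solution over the nonnegative reals, then it has a nonnegative integral solution. -/
theorem stmt1 {k : ℕ} (n : Finset (Fin k) → ℕ) (L U : ℕ) (hLU : L ≤ U)
    (hreal : ∃ x : Finset (Fin k) → Fin k → ℝ,
      (∀ T j, 0 ≤ x T j) ∧
      (∀ T : Finset (Fin k), T.Nonempty → ∑ j ∈ T, x T j = (n T : ℝ)) ∧
      (∀ j : Fin k,
        (L : ℝ) ≤ ∑ T : Finset (Fin k), (if j ∈ T then x T j else 0) ∧
        ∑ T : Finset (Fin k), (if j ∈ T then x T j else 0) ≤ (U : ℝ))) :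
    ∃ y : Finset (Fin k) → Fin k → ℕ,
      (∀ T : Finset (Fin k), T.Nonempty → ∑ j ∈ T, y T j = n T) ∧
      (∀ j : Fin k,
        L ≤ ∑ T : Finset (Fin k), (if j ∈ T then y T j else 0) ∧
        ∑ T : Finset (Fin k), (if j ∈ T then y T j else 0) ≤ U) :=
  stmt1_general n L U hreal
end

section
/- In the bipartite flow network where each left vertex has an integer supply that is exactly saturated by the flow, if the subgraph of edges carrying non-integral flow values is nonempty and contains no cycle, then any maximal path in this subgraph has both of its endpoints among the right-side vertices. -/
/-!
A left vertex carrying exactly one fractional edge would have a non-integral total flow, since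
its supply and all its other flows are integers. In an acyclic graph a path starting at `u` and
containing every neighbour of `u` forces `u` to have a single neighbour (otherwise the path back
to a second neighbour would close a cycle), so neither end of a maximal path can lie on the left.
-/

open SimpleGraph

theorem SimpleGraph.IsAcyclic.eq_snd_of_adj_of_mem_support {V : Type*} {G : SimpleGraph V}
    (hG : G.IsAcyclic) {u v w : V} {p : G.Walk u v} (hp : p.IsPath) (hw : G.Adj u w)
    (hmem : w ∈ p.support) : w = p.snd := by
  classical
  have htake : p.takeUntil w hmem = Walk.cons hw Walk.nil :=
    congrArg Subtype.val
      ((hG.subsingleton_path u w).elim ⟨_, hp.takeUntil hmem⟩ (Path.singleton hw))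
  rw [← p.take_spec hmem, htake, Walk.cons_append, Walk.snd_cons]

theorem AddSubgroup.mem_of_sum_mem_of_forall_ne_mem {ι M : Type*} [AddCommGroup M]
    [DecidableEq ι] (S : AddSubgroup M) {s : Finset ι} {f : ι → M} {i : ι} (hi : i ∈ s)
    (hsum : ∑ j ∈ s, f j ∈ S) (hne : ∀ j ∈ s, j ≠ i → f j ∈ S) : f i ∈ S := by
  rw [← add_sub_cancel_right (f i) (∑ j ∈ s.erase i, f j), Finset.add_sum_erase s f hi]
  exact S.sub_mem hsum <| S.sum_mem fun j hj =>
    hne j (Finset.mem_of_mem_erase hj) (Finset.ne_of_mem_erase hj)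

theorem isRight_of_forall_adj_mem_support {A B : Type*} [Fintype B] {f : A → B → ℝ}
    {n : A → ℤ} {G : SimpleGraph (A ⊕ B)} (hsupply : ∀ a, ∑ b, f a b = (n a : ℝ))
    (hadj : ∀ a x, G.Adj (Sum.inl a) x ↔ ∃ b, x = Sum.inr b ∧ ¬ ∃ m : ℤ, f a b = m)
    (hacyclic : G.IsAcyclic) {u v : A ⊕ B} {p : G.Walk u v} (hp : p.IsPath)
    (hlen : 0 < p.length) (hmax : ∀ w, G.Adj u w → w ∈ p.support) : u.isRight := by
  classical
  cases u with
  | inr b => rfl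
  | inl a =>
    exfalso
    obtain ⟨b₀, hsnd, hfrac⟩ :=
      (hadj a p.snd).1 (Walk.adj_snd (Walk.not_nil_iff_lt_length.2 hlen))
    have hint : ∀ b ∈ Finset.univ, b ≠ b₀ → f a b ∈ (Int.castAddHom ℝ).range := by
      intro b _ hb
      by_contra hfrac_b
      have hab := (hadj a (.inr b)).2 ⟨b, rfl, fun ⟨m, hm⟩ => hfrac_b ⟨m, by simp [hm]⟩⟩
      have hb_snd := hacyclic.eq_snd_of_adj_of_mem_support hp hab (hmax _ hab)
      exact hb (Sum.inr_injective (hb_snd.trans hsnd))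
    obtain ⟨m, hm⟩ := (Int.castAddHom ℝ).range.mem_of_sum_mem_of_forall_ne_mem
      (Finset.mem_univ b₀) ⟨n a, by simp [hsupply]⟩ hint
    exact hfrac ⟨m, by simpa using hm.symm⟩

theorem stmt3_general {A B : Type*} [Fintype B]
    (f : A → B → ℝ) (n : A → ℤ)
    (hsupply : ∀ a, ∑ b, f a b = (n a : ℝ))
    (G : SimpleGraph (A ⊕ B))
    (hadj : ∀ u v, G.Adj u v ↔
      ((∃ a b, u = Sum.inl a ∧ v = Sum.inr b ∧ ¬ ∃ m : ℤ, f a b = (m : ℝ)) ∨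
       (∃ a b, u = Sum.inr b ∧ v = Sum.inl a ∧ ¬ ∃ m : ℤ, f a b = (m : ℝ))))
    (hacyclic : G.IsAcyclic)
    {u v : A ⊕ B} (p : G.Walk u v) (hp : p.IsPath) (hlen : 0 < p.length)
    (hmaxu : ∀ w, G.Adj u w → w ∈ p.support)
    (hmaxv : ∀ w, G.Adj v w → w ∈ p.support) :
    u.isRight = true ∧ v.isRight = true := by
  have hadj_inl : ∀ a x, G.Adj (Sum.inl a) x ↔ ∃ b, x = Sum.inr b ∧ ¬ ∃ m : ℤ, f a b = m := by
    intro a x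
    simp [hadj]
  exact ⟨isRight_of_forall_adj_mem_support hsupply hadj_inl hacyclic hp hlen hmaxu,
    isRight_of_forall_adj_mem_support hsupply hadj_inl hacyclic hp.reverse (by simpa)
      (by simpa using hmaxv)⟩

/-- in the bipartite flow network whose left vertices have integer supplies
exactly saturated by the flow, if the subgraph of edges carrying non-integral flow is
acyclic, then any maximal (non-extendable) path of this subgraph has both endpoints on
the right side. -/
theorem stmt3 {A B : Type*} [Fintype A] [Fintype B]
    (f : A → B → ℝ) (n : A → ℤ)
    (hsupply : ∀ a, ∑ b, f a b = (n a : ℝ))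
    (G : SimpleGraph (A ⊕ B))
    (hadj : ∀ u v, G.Adj u v ↔
      ((∃ a b, u = Sum.inl a ∧ v = Sum.inr b ∧ ¬ ∃ m : ℤ, f a b = (m : ℝ)) ∨
       (∃ a b, u = Sum.inr b ∧ v = Sum.inl a ∧ ¬ ∃ m : ℤ, f a b = (m : ℝ))))
    (hacyclic : G.IsAcyclic)
    {u v : A ⊕ B} (p : G.Walk u v) (hp : p.IsPath) (hlen : 0 < p.length)
    (hmaxu : ∀ w, G.Adj u w → w ∈ p.support)
    (hmaxv : ∀ w, G.Adj v w → w ∈ p.support) :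
    u.isRight = true ∧ v.isRight = true :=
  stmt3_general f n hsupply G hadj hacyclic p hp hlen hmaxu hmaxv
end

section
/- Let P be n points in ℝ^d, let C_1,...,C_k be a partition of P into clusters with centers chosen so that the optimal balanced k-center radius is r_opt (each C_j is contained in a ball of radius r_opt and L ≤ |C_j| ≤ U). Let s_1,...,s_k be the points selected by Gonzalez's farthest-point algorithm. Then there exists a k-tuple (s'_1,...,s'_k) ∈ {s_1,...,s_k}^k such that for each j, every point q ∈ C_j satisfies ‖q - s'_j‖ ≤ 4·r_opt. Hence assigning cluster C_j the center s'_j yields a balanced clustering with maximum radius at most 4·r_opt. -/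
/-!
Assign each Gonzalez center `s i` to the optimal cluster containing it. If no two centers share a
cluster, every cluster contains a center, which is within its diameter `2 r_opt` of all its points.
Otherwise two centers `s i₁, s i₂` with `i₁ < i₂` share a cluster, so `dist (s i₂) (s i₁) ≤ 2 r_opt`;
by the farthest-point rule every point of `P` is then within `2 r_opt` of an earlier center, and a
cluster is served by the center nearest to any one of its points, at cost `2 r_opt + 2 r_opt`.
-/

variable {α ι : Type*} [PseudoMetricSpace α]

lemma dist_le_two_mul_of_forall_dist_le {S : Finset α} {c : α} {r : ℝ}
    (h : ∀ q ∈ S, dist q c ≤ r) {q q' : α} (hq : q ∈ S) (hq' : q' ∈ S) :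
    dist q q' ≤ 2 * r := by
  linarith [dist_triangle_right q q' c, h q hq, h q' hq']

/-- Implied by Gonzalez's rule that `s j` maximizes the distance to `{s l | l < j}` over `P`. -/
def IsFarthestPointSeq [LT ι] (P : Finset α) (s : ι → α) : Prop :=
  ∀ j, ∀ p ∈ P, ∀ l, l < j → ∃ l', l' < j ∧ dist p (s l') ≤ dist (s j) (s l)

lemma IsFarthestPointSeq.exists_dist_le [LT ι] {P : Finset α} {s : ι → α}
    (hs : IsFarthestPointSeq P s) {i₁ i₂ : ι} (hlt : i₁ < i₂) {r : ℝ}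
    (hr : dist (s i₂) (s i₁) ≤ r) {p : α} (hp : p ∈ P) : ∃ i, dist p (s i) ≤ r :=
  let ⟨l, _, hl⟩ := hs i₂ p hp i₁ hlt
  ⟨l, hl.trans hr⟩

lemma exists_forall_dist_le_add_of_forall_exists_dist_le {P S : Finset α} {s : ι → α} {r D : ℝ}
    (hcover : ∀ p ∈ P, ∃ i, dist p (s i) ≤ r) (hSP : S ⊆ P) (hS : S.Nonempty)
    (hdiam : ∀ q ∈ S, ∀ q' ∈ S, dist q q' ≤ D) : ∃ i, ∀ q ∈ S, dist q (s i) ≤ D + r := by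
  obtain ⟨q₀, hq₀⟩ := hS
  obtain ⟨i, hi⟩ := hcover q₀ (hSP hq₀)
  exact ⟨i, fun q hq => (dist_triangle q q₀ (s i)).trans (add_le_add (hdiam q hq q₀ hq₀) hi)⟩

lemma exists_forall_dist_le_of_injective [Finite ι] {C : ι → Finset α} {s : ι → α} {D : ℝ}
    {f : ι → ι} (hf : Function.Injective f) (hsC : ∀ i, s i ∈ C (f i))
    (hdiam : ∀ j, ∀ q ∈ C j, ∀ q' ∈ C j, dist q q' ≤ D) (j : ι) :
    ∃ i, ∀ q ∈ C j, dist q (s i) ≤ D := by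
  obtain ⟨i, rfl⟩ := (Finite.injective_iff_surjective.mp hf) j
  exact ⟨i, fun q hq => hdiam (f i) q hq (s i) (hsC i)⟩

lemma IsFarthestPointSeq.exists_forall_dist_le [LinearOrder ι] [Finite ι] {P : Finset α}
    {s : ι → α} (hs : IsFarthestPointSeq P s) {C : ι → Finset α}
    (hCP : ∀ j, C j ⊆ P) (hC : ∀ j, (C j).Nonempty) (hsC : ∀ i, ∃ j, s i ∈ C j)
    {D : ℝ} (hdiam : ∀ j, ∀ q ∈ C j, ∀ q' ∈ C j, dist q q' ≤ D) (j : ι) :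
    ∃ i, ∀ q ∈ C j, dist q (s i) ≤ 2 * D := by
  choose f hf using hsC
  by_cases hinj : Function.Injective f
  · obtain ⟨i, hi⟩ := exists_forall_dist_le_of_injective hinj hf hdiam j
    have hD : 0 ≤ D := by
      obtain ⟨q, hq⟩ := hC j
      simpa using hdiam j q hq q hq
    exact ⟨i, fun q hq => (hi q hq).trans (by linarith)⟩
  · obtain ⟨i₁, i₂, hf₁₂, hne⟩ := Function.not_injective_iff.mp hinj
    wlog hlt : i₁ < i₂ generalizing i₁ i₂
    · exact this i₂ i₁ hf₁₂.symm hne.symm (hne.lt_or_gt.resolve_left hlt)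
    have hcollide : dist (s i₂) (s i₁) ≤ D := hdiam (f i₁) _ (hf₁₂ ▸ hf i₂) _ (hf i₁)
    rw [two_mul]
    exact exists_forall_dist_le_add_of_forall_exists_dist_le
      (fun p hp => hs.exists_dist_le hlt hcollide hp) (hCP j) (hC j) (hdiam j)

theorem stmt4_general {d k : ℕ} (P : Finset (EuclideanSpace ℝ (Fin d)))
    (L U : ℕ) (hL : 0 < L)
    (C : Fin k → Finset (EuclideanSpace ℝ (Fin d)))
    (cc : Fin k → EuclideanSpace ℝ (Fin d)) (ropt : ℝ)
    (hsub : ∀ j, C j ⊆ P)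
    (hcoverP : ∀ p ∈ P, ∃ j, p ∈ C j)
    (hsize : ∀ j, L ≤ (C j).card ∧ (C j).card ≤ U)
    (hball : ∀ j, ∀ q ∈ C j, dist q (cc j) ≤ ropt)
    (s : Fin k → EuclideanSpace ℝ (Fin d)) (hsP : ∀ j, s j ∈ P)
    (hGon : ∀ j : Fin k, ∀ p ∈ P, ∀ l, l < j →
      ∃ l', l' < j ∧ dist p (s l') ≤ dist (s j) (s l)) :
    ∃ s' : Fin k → EuclideanSpace ℝ (Fin d),
      (∀ j, ∃ i, s' j = s i) ∧
      ∀ j, ∀ q ∈ C j, dist q (s' j) ≤ 4 * ropt := by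
  have hC : ∀ j, (C j).Nonempty := fun j => Finset.card_pos.mp (hL.trans_le (hsize j).1)
  have hdiam : ∀ j, ∀ q ∈ C j, ∀ q' ∈ C j, dist q q' ≤ 2 * ropt :=
    fun j _ hq _ hq' => dist_le_two_mul_of_forall_dist_le (hball j) hq hq'
  choose i hi using IsFarthestPointSeq.exists_forall_dist_le hGon hsub hC
    (fun i => hcoverP (s i) (hsP i)) hdiam
  exact ⟨fun j => s (i j), fun j => ⟨i j, rfl⟩, fun j q hq => (hi j q hq).trans_eq (by ring)⟩

/-- given an optimal balanced k-center solution of radius `r_opt` and the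
points `s 0, …, s (k-1)` produced by Gonzalez's farthest-point algorithm, some k-tuple of
points of `{s 0, …, s (k-1)}` serves as centers so that every point of each optimal
cluster `C j` is within distance `4 * r_opt` of the center assigned to `C j`. -/
theorem stmt4 {d k : ℕ} (hk : 0 < k) (P : Finset (EuclideanSpace ℝ (Fin d)))
    (L U : ℕ) (hL : 0 < L) (hLU : L ≤ U)
    (C : Fin k → Finset (EuclideanSpace ℝ (Fin d)))
    (cc : Fin k → EuclideanSpace ℝ (Fin d)) (ropt : ℝ) (hropt : 0 ≤ ropt)
    (hsub : ∀ j, C j ⊆ P)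
    (hdisj : ∀ i j, i ≠ j → Disjoint (C i) (C j))
    (hcoverP : ∀ p ∈ P, ∃ j, p ∈ C j)
    (hsize : ∀ j, L ≤ (C j).card ∧ (C j).card ≤ U)
    (hball : ∀ j, ∀ q ∈ C j, dist q (cc j) ≤ ropt)
    (s : Fin k → EuclideanSpace ℝ (Fin d)) (hsP : ∀ j, s j ∈ P)
    (hGon : ∀ j : Fin k, ∀ p ∈ P, ∀ l, l < j →
      ∃ l', l' < j ∧ dist p (s l') ≤ dist (s j) (s l)) :
    ∃ s' : Fin k → EuclideanSpace ℝ (Fin d),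
      (∀ j, ∃ i, s' j = s i) ∧
      ∀ j, ∀ q ∈ C j, dist q (s' j) ≤ 4 * ropt :=
  stmt4_general P L U hL C cc ropt hsub hcoverP hsize hball s hsP hGon
end

section
/- Let s_1,...,s_m be points produced by Gonzalez's farthest-point algorithm on a finite set P in a metric space. If s_{j_1} and s_{j_2} (with j_1 < j_2) both lie in a cluster C of diameter-bound 2r (i.e., C is contained in a ball of radius r), then for every point p ∈ P, min_{1 ≤ l ≤ j_2 - 1} dist(p, s_l) ≤ 2r. -/
theorem stmt5_general {X : Type*} [MetricSpace X] (P : Finset X) {m : ℕ} (s : Fin m → X)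
    (hGon : ∀ j : Fin m, ∀ p ∈ P, ∀ l, l < j →
      ∃ l', l' < j ∧ dist p (s l') ≤ dist (s j) (s l))
    (j₁ j₂ : Fin m) (h12 : j₁ < j₂) (c : X) (r : ℝ)
    (h1 : dist (s j₁) c ≤ r) (h2 : dist (s j₂) c ≤ r) :
    ∀ p ∈ P, ∃ l, l < j₂ ∧ dist p (s l) ≤ 2 * r := by
  intro p hp
  obtain ⟨l, hl, hp_near⟩ := hGon j₂ p hp j₁ h12
  have hsep : dist (s j₂) (s j₁) ≤ 2 * r := by
    linarith [dist_triangle_right (s j₂) (s j₁) c]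
  exact ⟨l, hl, hp_near.trans hsep⟩

/-- if two Gonzalez-selected points `s j₁, s j₂` (`j₁ < j₂`) lie in a common
ball of radius `r`, then every point of `P` is within distance `2r` of one of the first
`j₂` selected points (i.e. of some `s l` with `l < j₂`). -/
theorem stmt5 {X : Type*} [MetricSpace X] (P : Finset X) {m : ℕ} (s : Fin m → X)
    (hsP : ∀ j, s j ∈ P)
    (hGon : ∀ j : Fin m, ∀ p ∈ P, ∀ l, l < j →
      ∃ l', l' < j ∧ dist p (s l') ≤ dist (s j) (s l))
    (j₁ j₂ : Fin m) (h12 : j₁ < j₂) (c : X) (r : ℝ)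
    (h1 : dist (s j₁) c ≤ r) (h2 : dist (s j₂) c ≤ r) :
    ∀ p ∈ P, ∃ l, l < j₂ ∧ dist p (s l) ≤ 2 * r :=
  stmt5_general P s hGon j₁ j₂ h12 c r h1 h2
end

section
/- Let P be n points in ℝ^d with fixed centers c_1,...,c_k, and consider the level-set partition of P into regions R_{(l_1,...,l_k)} where point p lies in region (l_1,...,l_k) iff for each j, ‖p - c_j‖ ∈ ((1+ε)^{l_j - 1} r_min, (1+ε)^{l_j} r_min] (with level 0 meaning ‖p - c_j‖ ≤ r_min). Then: (i) balanced partitions of P into clusters of sizes in [L,U] correspond exactly to nonnegative integral solutions of the system Σ_j x^j_{(l_1,...,l_k)} = n_{(l_1,...,l_k)} for all tuples and L ≤ Σ_{tuples} x^j_{(l_1,...,l_k)} ≤ U for all j; and (ii) if a balanced partition has k-median cost W = Σ_j Σ_{p ∈ P_j} ‖p - c_j‖, then the corresponding integral solution has linear objective value Σ Σ_j (1+ε)^{l_j} r_min · x^j_{(l_1,...,l_k)} lying in the interval [W, (1+ε)W). -/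
/-!
Each distance to a center falls into exactly one annulus level, so the regions partition `P`.
A balanced partition therefore amounts to deciding, for every region, how many of its points
go to each cluster; conversely any such numbers are realised by splitting each region
arbitrarily. Rounding each distance up to the outer radius of its annulus multiplies it by a
factor in `[1, 1 + ε)`, which gives the bounds on the objective.
-/

attribute [local instance] Classical.propDecidable

/-- Point `p` lies in the level-set region indexed by the tuple `t`: for every center
`c j`, the distance `dist p (c j)` lies in the annulus of level `t j`. -/
def inRegion {d k L' : ℕ} (c : Fin k → EuclideanSpace ℝ (Fin d)) (ε rmin : ℝ)
    (p : EuclideanSpace ℝ (Fin d)) (t : Fin k → Fin (L' + 1)) : Prop :=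
  ∀ j, dist p (c j) ≤ (1 + ε) ^ (t j : ℕ) * rmin ∧
    ((t j : ℕ) = 0 ∨ (1 + ε) ^ ((t j : ℕ) - 1) * rmin < dist p (c j))

/-- `Q` is a partition of `P` into `k` clusters whose sizes all lie in `[L, U]`. -/
def IsBalancedPartition {α : Type*} (P : Finset α) (k L U : ℕ)
    (Q : Fin k → Finset α) : Prop :=
  (∀ j, Q j ⊆ P) ∧ (∀ i j, i ≠ j → Disjoint (Q i) (Q j)) ∧
  (∀ p ∈ P, ∃ j, p ∈ Q j) ∧ (∀ j, L ≤ (Q j).card ∧ (Q j).card ≤ U)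

open Finset

structure IsPartitionOf {α ι : Type*} (s : Finset α) (Q : ι → Finset α) : Prop where
  subset : ∀ j, Q j ⊆ s
  disjoint : ∀ i j, i ≠ j → Disjoint (Q i) (Q j)
  cover : ∀ p ∈ s, ∃ j, p ∈ Q j

theorem isBalancedPartition_iff {α : Type*} {P : Finset α} {k L U : ℕ}
    {Q : Fin k → Finset α} :
    IsBalancedPartition P k L U Q ↔ IsPartitionOf P Q ∧ ∀ j, L ≤ #(Q j) ∧ #(Q j) ≤ U :=
  ⟨fun ⟨hsub, hdisj, hcov, hsize⟩ => ⟨⟨hsub, hdisj, hcov⟩, hsize⟩,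
    fun ⟨⟨hsub, hdisj, hcov⟩, hsize⟩ => ⟨hsub, hdisj, hcov, hsize⟩⟩

namespace IsPartitionOf

variable {α ι τ : Type*} {s : Finset α} {Q : ι → Finset α}

theorem biUnion_eq [Fintype ι] (hQ : IsPartitionOf s Q) : univ.biUnion Q = s := by
  ext p
  simp only [mem_biUnion, mem_univ, true_and]
  exact ⟨fun ⟨j, hj⟩ => hQ.subset j hj, hQ.cover p⟩

theorem card_eq_sum [Fintype ι] (hQ : IsPartitionOf s Q) : #s = ∑ j, #(Q j) := by
  rw [← hQ.biUnion_eq, card_biUnion fun i _ j _ hij => hQ.disjoint i j hij]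

theorem filter (hQ : IsPartitionOf s Q) (q : α → Prop) [DecidablePred q] :
    IsPartitionOf (s.filter q) fun j => (Q j).filter q where
  subset j := filter_subset_filter q (hQ.subset j)
  disjoint i j hij := disjoint_filter_filter (hQ.disjoint i j hij)
  cover p hp := by
    obtain ⟨hps, hpq⟩ := mem_filter.mp hp
    obtain ⟨j, hj⟩ := hQ.cover p hps
    exact ⟨j, mem_filter.mpr ⟨hj, hpq⟩⟩

section Fibers

variable [DecidableEq τ] {f : α → τ} {Q : τ → ι → Finset α}

theorem disjoint_of_fiber_ne (hQ : ∀ t, IsPartitionOf (s.filter (f · = t)) (Q t))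
    {t t' : τ} (htt : t ≠ t') (i j : ι) : Disjoint (Q t i) (Q t' j) :=
  disjoint_left.mpr fun _ hpi hpj => htt <|
    (mem_filter.mp ((hQ t).subset i hpi)).2.symm.trans (mem_filter.mp ((hQ t').subset j hpj)).2

theorem glue [Fintype τ] (hQ : ∀ t, IsPartitionOf (s.filter (f · = t)) (Q t)) :
    IsPartitionOf s fun j => univ.biUnion (Q · j) where
  subset j := biUnion_subset.mpr fun t _ p hp => (mem_filter.mp ((hQ t).subset j hp)).1
  disjoint i j hij := by
    rw [disjoint_biUnion_left]
    intro t _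
    rw [disjoint_biUnion_right]
    intro t' _
    by_cases htt : t = t'
    · exact htt ▸ (hQ t).disjoint i j hij
    · exact disjoint_of_fiber_ne hQ htt i j
  cover p hp := by
    obtain ⟨j, hj⟩ := (hQ (f p)).cover p (mem_filter.mpr ⟨hp, rfl⟩)
    exact ⟨j, mem_biUnion.mpr ⟨f p, mem_univ _, hj⟩⟩

end Fibers

end IsPartitionOf

theorem exists_isPartitionOf_card_eq {α : Type*} :
    ∀ {k : ℕ} (x : Fin k → ℕ) {s : Finset α}, #s = ∑ j, x j →
      ∃ Q : Fin k → Finset α, IsPartitionOf s Q ∧ ∀ j, #(Q j) = x j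
  | 0, x, s, hs => ⟨fun _ => ∅, ⟨fun j => j.elim0, fun i => i.elim0,
      fun p hp => by simp_all⟩, fun j => j.elim0⟩
  | k + 1, x, s, hs => by
    rw [Fin.sum_univ_succ] at hs
    obtain ⟨s₀, hs₀, hs₀card⟩ := exists_subset_card_eq (show x 0 ≤ #s by omega)
    obtain ⟨Q, ⟨hsub, hdisj, hcov⟩, hcard⟩ := exists_isPartitionOf_card_eq
      (fun j => x j.succ) (s := s \ s₀) (by rw [card_sdiff_of_subset hs₀]; omega)
    have hdisj₀ : ∀ j, Disjoint s₀ (Q j) := fun j =>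
      disjoint_of_subset_right (hsub j) disjoint_sdiff
    refine ⟨Fin.cons s₀ Q, ⟨fun j => Fin.cases hs₀ (fun i => (hsub i).trans sdiff_subset) j,
      fun i j hij => ?_, fun p hp => ?_⟩, fun j => Fin.cases hs₀card hcard j⟩
    · cases i using Fin.cases <;> cases j using Fin.cases
      · exact absurd rfl hij
      · exact hdisj₀ _
      · exact (hdisj₀ _).symm
      · exact hdisj _ _ (fun h => hij (congrArg Fin.succ h))
    · by_cases h₀ : p ∈ s₀
      · exact ⟨0, h₀⟩
      · obtain ⟨j, hj⟩ := hcov p (mem_sdiff.mpr ⟨hp, h₀⟩)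
        exact ⟨j.succ, hj⟩

theorem exists_isBalancedPartition_iff {α τ : Type*} [Fintype τ] [DecidableEq τ]
    (P : Finset α) (f : α → τ) (k L U : ℕ) :
    (∃ Q : Fin k → Finset α, IsBalancedPartition P k L U Q) ↔
      ∃ x : τ → Fin k → ℕ, (∀ t, ∑ j, x t j = #(P.filter (f · = t))) ∧
        ∀ j, L ≤ ∑ t, x t j ∧ ∑ t, x t j ≤ U := by
  simp only [isBalancedPartition_iff]
  constructor
  · rintro ⟨Q, hQ, hsize⟩
    refine ⟨fun t j => #((Q j).filter (f · = t)), fun t => ((hQ.filter _).card_eq_sum).symm,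
      fun j => ?_⟩
    rw [← card_eq_sum_card_fiberwise fun p _ => mem_univ (f p)]
    exact hsize j
  · rintro ⟨x, hfiber, hsize⟩
    choose Q hQ hcard using fun t => exists_isPartitionOf_card_eq (x t) (hfiber t).symm
    refine ⟨_, IsPartitionOf.glue hQ, fun j => ?_⟩
    rw [card_biUnion fun t _ t' _ htt => IsPartitionOf.disjoint_of_fiber_ne hQ htt j j]
    simpa only [hcard] using hsize j

theorem sum_mul_card_filter_eq_sum {α τ R : Type*} [Fintype τ] [DecidableEq τ]
    [NonAssocSemiring R] (s : Finset α) (f : α → τ) (w : τ → R) :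
    ∑ t, w t * #(s.filter (f · = t)) = ∑ p ∈ s, w (f p) := by
  rw [← sum_fiberwise s f]
  refine sum_congr rfl fun t _ => ?_
  rw [sum_congr rfl fun p hp => congrArg w (mem_filter.mp hp).2, sum_const, nsmul_eq_mul']

section Level

def IsLevel (ε rmin r : ℝ) (l : ℕ) : Prop :=
  r ≤ (1 + ε) ^ l * rmin ∧ (l = 0 ∨ (1 + ε) ^ (l - 1) * rmin < r)

variable {ε rmin r : ℝ}

theorem IsLevel.unique (hε : 0 ≤ ε) (hrmin : 0 ≤ rmin) {a b : ℕ} (ha : IsLevel ε rmin r a)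
    (hb : IsLevel ε rmin r b) : a = b := by
  have never_lt : ∀ {a b : ℕ}, IsLevel ε rmin r a → IsLevel ε rmin r b → ¬ a < b := by
    intro a b ha hb hab
    rcases hb.2 with hb0 | hb'
    · omega
    · have := pow_le_pow_right₀ (le_add_of_nonneg_right hε : (1 : ℝ) ≤ 1 + ε)
        (show a ≤ b - 1 by omega)
      nlinarith [ha.1]
  exact le_antisymm (not_lt.mp (never_lt hb ha)) (not_lt.mp (never_lt ha hb))

theorem exists_isLevel {N : ℕ} (h : r ≤ (1 + ε) ^ N * rmin) :
    ∃ l ≤ N, IsLevel ε rmin r l := by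
  have hex : ∃ l, r ≤ (1 + ε) ^ l * rmin := ⟨N, h⟩
  refine ⟨Nat.find hex, Nat.find_min' hex h, Nat.find_spec hex, ?_⟩
  rcases Nat.eq_zero_or_pos (Nat.find hex) with h0 | h0
  · exact Or.inl h0
  · exact Or.inr (lt_of_not_ge (Nat.find_min hex (by omega)))

theorem IsLevel.lt_mul (hε : 0 < ε) (hrmin : 0 < rmin) (hr : rmin ≤ r) {l : ℕ}
    (h : IsLevel ε rmin r l) : (1 + ε) ^ l * rmin < (1 + ε) * r := by
  rcases Nat.eq_zero_or_pos l with rfl | hl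
  · nlinarith
  · calc (1 + ε) ^ l * rmin = (1 + ε) * ((1 + ε) ^ (l - 1) * rmin) := by
          rw [← mul_assoc, ← pow_succ', Nat.sub_add_cancel hl]
      _ < (1 + ε) * r := by gcongr; exact h.2.resolve_left hl.ne'

end Level

theorem exists_inRegion_iff_eq {d k L' : ℕ} {P : Finset (EuclideanSpace ℝ (Fin d))}
    {c : Fin k → EuclideanSpace ℝ (Fin d)} {ε rmin : ℝ} (hε : 0 ≤ ε) (hrmin : 0 ≤ rmin)
    (hhigh : ∀ p ∈ P, ∀ j, dist p (c j) ≤ (1 + ε) ^ L' * rmin) :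
    ∃ f : EuclideanSpace ℝ (Fin d) → Fin k → Fin (L' + 1),
      ∀ p ∈ P, ∀ t, inRegion c ε rmin p t ↔ f p = t := by
  have hex : ∀ p ∈ P, ∃ t : Fin k → Fin (L' + 1), inRegion c ε rmin p t := by
    intro p hp
    choose l hlN hl using fun j => exists_isLevel (hhigh p hp j)
    exact ⟨fun j => ⟨l j, Nat.lt_succ_of_le (hlN j)⟩, hl⟩
  choose! f hf using hex
  refine ⟨f, fun p hp t => ⟨fun ht => ?_, fun hft => hft ▸ hf p hp⟩⟩
  funext j
  exact Fin.ext (IsLevel.unique hε hrmin (hf p hp j) (ht j))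

theorem stmt7_general {d k L' : ℕ} (P : Finset (EuclideanSpace ℝ (Fin d)))
    (hP : P.Nonempty)
    (c : Fin k → EuclideanSpace ℝ (Fin d)) (ε rmin : ℝ) (hε : 0 < ε) (hrmin : 0 < rmin)
    (hlow : ∀ p ∈ P, ∀ j, rmin ≤ dist p (c j))
    (hhigh : ∀ p ∈ P, ∀ j, dist p (c j) ≤ (1 + ε) ^ L' * rmin)
    (L U : ℕ)
    (n : (Fin k → Fin (L' + 1)) → ℕ)
    (hn : ∀ t, n t = (P.filter fun p => inRegion c ε rmin p t).card) :
    ((∃ Q : Fin k → Finset (EuclideanSpace ℝ (Fin d)), IsBalancedPartition P k L U Q) ↔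
      (∃ x : (Fin k → Fin (L' + 1)) → Fin k → ℕ,
        (∀ t, ∑ j, x t j = n t) ∧
        (∀ j, L ≤ ∑ t, x t j ∧ ∑ t, x t j ≤ U))) ∧
    (∀ Q : Fin k → Finset (EuclideanSpace ℝ (Fin d)), IsBalancedPartition P k L U Q →
      (∑ j, ∑ p ∈ Q j, dist p (c j)) ≤
        (∑ t : Fin k → Fin (L' + 1), ∑ j, (1 + ε) ^ (t j : ℕ) * rmin *
          ((Q j).filter fun p => inRegion c ε rmin p t).card) ∧
      (∑ t : Fin k → Fin (L' + 1), ∑ j, (1 + ε) ^ (t j : ℕ) * rmin *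
          ((Q j).filter fun p => inRegion c ε rmin p t).card) <
        (1 + ε) * ∑ j, ∑ p ∈ Q j, dist p (c j)) := by
  obtain ⟨f, hf⟩ := exists_inRegion_iff_eq hε.le hrmin.le hhigh
  have hregion : ∀ s ⊆ P, ∀ t,
      (s.filter fun p => inRegion c ε rmin p t) = s.filter (f · = t) :=
    fun s hs t => filter_congr fun p hp => hf p (hs hp) t
  refine ⟨?_, fun Q hQ => ?_⟩
  · simp only [hn, hregion P subset_rfl]
    exact exists_isBalancedPartition_iff P f k L U
  obtain ⟨⟨hsub, -, hcov⟩, -⟩ := isBalancedPartition_iff.mp hQ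
  have hlevel : ∀ j, ∀ p ∈ Q j, IsLevel ε rmin (dist p (c j)) (f p j) :=
    fun j p hp => (hf p (hsub j hp) (f p)).mpr rfl j
  have hobjective : ∀ j, ∑ t : Fin k → Fin (L' + 1), (1 + ε) ^ (t j : ℕ) * rmin *
      ((Q j).filter fun p => inRegion c ε rmin p t).card =
        ∑ p ∈ Q j, (1 + ε) ^ (f p j : ℕ) * rmin := fun j => by
    simp only [hregion (Q j) (hsub j)]
    exact sum_mul_card_filter_eq_sum (Q j) f fun t => (1 + ε) ^ (t j : ℕ) * rmin
  rw [sum_comm, sum_congr rfl fun j _ => hobjective j]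
  refine ⟨sum_le_sum fun j _ => sum_le_sum fun p hp => (hlevel j p hp).1, ?_⟩
  obtain ⟨p₀, hp₀⟩ := hP
  obtain ⟨j₀, hj₀⟩ := hcov p₀ hp₀
  simp only [mul_sum, sum_sigma']
  refine sum_lt_sum_of_nonempty ⟨⟨j₀, p₀⟩, mem_sigma.mpr ⟨mem_univ _, hj₀⟩⟩
    fun x hx => ?_
  have hx : x.2 ∈ Q x.1 := (mem_sigma.mp hx).2
  exact (hlevel x.1 x.2 hx).lt_mul hε hrmin (hlow x.2 (hsub x.1 hx) x.1)

/-- (i) balanced partitions of `P` correspond to nonnegative integral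
solutions of the level-set system; (ii) if a balanced partition has k-median cost `W`,
the objective value of the corresponding integral solution lies in `[W, (1+ε)W)`. -/
theorem stmt7 {d k L' : ℕ} (hk : 0 < k) (P : Finset (EuclideanSpace ℝ (Fin d)))
    (hP : P.Nonempty)
    (c : Fin k → EuclideanSpace ℝ (Fin d)) (ε rmin : ℝ) (hε : 0 < ε) (hrmin : 0 < rmin)
    (hlow : ∀ p ∈ P, ∀ j, rmin ≤ dist p (c j))
    (hhigh : ∀ p ∈ P, ∀ j, dist p (c j) ≤ (1 + ε) ^ L' * rmin)
    (L U : ℕ) (hL : 0 < L)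
    (n : (Fin k → Fin (L' + 1)) → ℕ)
    (hn : ∀ t, n t = (P.filter fun p => inRegion c ε rmin p t).card) :
    ((∃ Q : Fin k → Finset (EuclideanSpace ℝ (Fin d)), IsBalancedPartition P k L U Q) ↔
      (∃ x : (Fin k → Fin (L' + 1)) → Fin k → ℕ,
        (∀ t, ∑ j, x t j = n t) ∧
        (∀ j, L ≤ ∑ t, x t j ∧ ∑ t, x t j ≤ U))) ∧
    (∀ Q : Fin k → Finset (EuclideanSpace ℝ (Fin d)), IsBalancedPartition P k L U Q →
      (∑ j, ∑ p ∈ Q j, dist p (c j)) ≤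
        (∑ t : Fin k → Fin (L' + 1), ∑ j, (1 + ε) ^ (t j : ℕ) * rmin *
          ((Q j).filter fun p => inRegion c ε rmin p t).card) ∧
      (∑ t : Fin k → Fin (L' + 1), ∑ j, (1 + ε) ^ (t j : ℕ) * rmin *
          ((Q j).filter fun p => inRegion c ε rmin p t).card) <
        (1 + ε) * ∑ j, ∑ p ∈ Q j, dist p (c j)) :=
  stmt7_general P hP c ε rmin hε hrmin hlow hhigh L U n hn
end

section
/- With the level-set discretization (coefficients α_{l} = (1+ε)^{l} r_min), the optimal value of the linear program minimizing Σ_{(l_1,...,l_k)} Σ_{j=1}^k α_{l_j} x^j_{(l_1,...,l_k)} subject to Σ_j x^j_{(l_1,...,l_k)} = n_{(l_1,...,l_k)} and L ≤ Σ x^j ≤ U over nonnegative reals is at most (1+ε) times the minimum balanced k-median cost achievable with the given centers c_1,...,c_k. -/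
attribute [local instance] Classical.propDecidable

/-!
Send every point of a balanced partition to the region it lies in, and let `x t j` count the
points of cluster `j` in region `t`. This is a feasible LP solution: its row sums are the
region counts because the clusters partition `P`, and its column sums are the cluster sizes.
A point `p` of cluster `j` in region `t` contributes `(1+ε)^(t j) rmin` to the objective;
by minimality of its level `t j` this is at most `(1+ε) ‖p - c j‖`.
-/

open Finset

/-- `r` lies in the `l`-th annulus `(a^(l-1) r₀, a^l r₀]`, the zeroth one being `(-∞, r₀]`. -/
def InLevelAnnulus (a r₀ r : ℝ) (l : ℕ) : Prop :=
  r ≤ a ^ l * r₀ ∧ (l = 0 ∨ a ^ (l - 1) * r₀ < r)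

namespace InLevelAnnulus

variable {a r₀ r : ℝ} {l l' : ℕ}

theorem unique (ha : 1 ≤ a) (hr₀ : 0 ≤ r₀) (h : InLevelAnnulus a r₀ r l)
    (h' : InLevelAnnulus a r₀ r l') : l = l' := by
  have key : ∀ {m m' : ℕ}, InLevelAnnulus a r₀ r m → InLevelAnnulus a r₀ r m' → ¬ m < m' := by
    rintro m m' ⟨hm, -⟩ ⟨-, hm' | hm'⟩ hlt
    · omega
    · have : a ^ m * r₀ ≤ a ^ (m' - 1) * r₀ := by gcongr; omega
      linarith
  exact le_antisymm (not_lt.1 (key h' h)) (not_lt.1 (key h h'))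

theorem pow_mul_le (ha : 1 ≤ a) (hr₀ : 0 ≤ r₀) (hr : r₀ ≤ r) (h : InLevelAnnulus a r₀ r l) :
    a ^ l * r₀ ≤ a * r := by
  rcases l with _ | m
  · nlinarith
  · have hlt : a ^ m * r₀ < r := h.2.resolve_left (Nat.succ_ne_zero m)
    rw [pow_succ', mul_assoc]
    gcongr

end InLevelAnnulus

theorem exists_inLevelAnnulus {a r₀ r : ℝ} {N : ℕ} (h : r ≤ a ^ N * r₀) :
    ∃ l ≤ N, InLevelAnnulus a r₀ r l := by
  have hex : ∃ l, r ≤ a ^ l * r₀ := ⟨N, h⟩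
  refine ⟨Nat.find hex, Nat.find_min' hex h, Nat.find_spec hex, ?_⟩
  rcases Nat.eq_zero_or_pos (Nat.find hex) with h0 | hpos
  · exact Or.inl h0
  · exact Or.inr (not_le.1 (Nat.find_min hex (Nat.sub_lt hpos one_pos)))

section Regions

variable {d k L' : ℕ} {c : Fin k → EuclideanSpace ℝ (Fin d)} {ε rmin : ℝ}
  {p : EuclideanSpace ℝ (Fin d)}

theorem exists_inRegion (h : ∀ j, dist p (c j) ≤ (1 + ε) ^ L' * rmin) :
    ∃ t : Fin k → Fin (L' + 1), inRegion c ε rmin p t := by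
  choose l hl hin using fun j => exists_inLevelAnnulus (h j)
  exact ⟨fun j => ⟨l j, Nat.lt_succ_of_le (hl j)⟩, hin⟩

theorem inRegion_unique (hε : 0 ≤ ε) (hrmin : 0 ≤ rmin) {t t' : Fin k → Fin (L' + 1)}
    (h : inRegion c ε rmin p t) (h' : inRegion c ε rmin p t') : t = t' :=
  funext fun j => Fin.ext <|
    InLevelAnnulus.unique (a := 1 + ε) (by linarith) hrmin (h j) (h' j)

end Regions

theorem sum_mul_card_fiber {α τ : Type*} [Fintype τ] [DecidableEq τ] (s : Finset α) (f : α → τ)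
    (w : τ → ℝ) :
    ∑ t, w t * #(s.filter (f · = t)) = ∑ p ∈ s, w (f p) := by
  rw [← sum_fiberwise' s f w]
  simp only [sum_const, nsmul_eq_mul, mul_comm]

namespace IsBalancedPartition

variable {α : Type*} {P : Finset α} {k L U : ℕ} {Q : Fin k → Finset α}

theorem biUnion_eq (hQ : IsBalancedPartition P k L U Q) : univ.biUnion Q = P := by
  ext p
  simp only [mem_biUnion, mem_univ, true_and]
  exact ⟨fun ⟨j, hj⟩ => hQ.1 j hj, hQ.2.2.1 p⟩

theorem card_filter (hQ : IsBalancedPartition P k L U Q) (q : α → Prop) [DecidablePred q] :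
    #(P.filter q) = ∑ j, #((Q j).filter q) := by
  rw [← hQ.biUnion_eq, filter_biUnion, card_biUnion]
  exact fun i _ j _ hij => disjoint_filter_filter (hQ.2.1 i j hij)

end IsBalancedPartition

theorem stmt8_general {d k L' : ℕ} (P : Finset (EuclideanSpace ℝ (Fin d)))
    (c : Fin k → EuclideanSpace ℝ (Fin d)) (ε rmin : ℝ) (hε : 0 < ε) (hrmin : 0 < rmin)
    (hlow : ∀ p ∈ P, ∀ j, rmin ≤ dist p (c j))
    (hhigh : ∀ p ∈ P, ∀ j, dist p (c j) ≤ (1 + ε) ^ L' * rmin)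
    (L U : ℕ)
    (n : (Fin k → Fin (L' + 1)) → ℕ)
    (hn : ∀ t, n t = (P.filter fun p => inRegion c ε rmin p t).card) :
    ∀ Q : Fin k → Finset (EuclideanSpace ℝ (Fin d)), IsBalancedPartition P k L U Q →
      ∃ x : (Fin k → Fin (L' + 1)) → Fin k → ℝ,
        (∀ t j, 0 ≤ x t j) ∧
        (∀ t, ∑ j, x t j = (n t : ℝ)) ∧
        (∀ j : Fin k, (L : ℝ) ≤ ∑ t : Fin k → Fin (L' + 1), x t j ∧
          ∑ t : Fin k → Fin (L' + 1), x t j ≤ (U : ℝ)) ∧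
        (∑ t : Fin k → Fin (L' + 1), ∑ j, (1 + ε) ^ (t j : ℕ) * rmin * x t j) ≤
          (1 + ε) * ∑ j, ∑ p ∈ Q j, dist p (c j) := by
  intro Q hQ
  have hex : ∀ p, ∃ t, p ∈ P → inRegion c ε rmin p t := fun p =>
    if hp : p ∈ P then (exists_inRegion (hhigh p hp)).imp fun _ h _ => h else ⟨0, (absurd · hp)⟩
  choose region hregion using hex
  have hfilter : ∀ t, P.filter (inRegion c ε rmin · t) = P.filter (region · = t) := fun t =>
    filter_congr fun p hp =>
      ⟨fun h => inRegion_unique hε.le hrmin.le (hregion p hp) h, fun h => h ▸ hregion p hp⟩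
  refine ⟨fun t j => #((Q j).filter (region · = t)), fun _ _ => by positivity, fun t => ?_,
    fun j => ?_, ?_⟩
  · rw [hn, hfilter, hQ.card_filter]
    push_cast; rfl
  · rw [← Nat.cast_sum, ← card_eq_sum_card_fiberwise fun _ _ => mem_univ _]
    exact_mod_cast hQ.2.2.2 j
  · rw [sum_comm, mul_sum]
    refine sum_le_sum fun j _ => ?_
    beta_reduce
    rw [sum_mul_card_fiber (Q j) region fun t => (1 + ε) ^ (t j : ℕ) * rmin, mul_sum]
    exact sum_le_sum fun p hp => InLevelAnnulus.pow_mul_le (by linarith) hrmin.le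
      (hlow p (hQ.1 j hp) j) (hregion p (hQ.1 j hp) j)

/-- for every balanced partition `Q` of `P` there is a feasible real
solution of the level-set LP whose objective is at most `(1+ε)` times the k-median cost
of `Q`; hence the LP optimum is at most `(1+ε)` times the minimum balanced k-median cost
with the given centers. -/
theorem stmt8 {d k L' : ℕ} (hk : 0 < k) (P : Finset (EuclideanSpace ℝ (Fin d)))
    (c : Fin k → EuclideanSpace ℝ (Fin d)) (ε rmin : ℝ) (hε : 0 < ε) (hrmin : 0 < rmin)
    (hlow : ∀ p ∈ P, ∀ j, rmin ≤ dist p (c j))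
    (hhigh : ∀ p ∈ P, ∀ j, dist p (c j) ≤ (1 + ε) ^ L' * rmin)
    (L U : ℕ) (hL : 0 < L)
    (n : (Fin k → Fin (L' + 1)) → ℕ)
    (hn : ∀ t, n t = (P.filter fun p => inRegion c ε rmin p t).card) :
    ∀ Q : Fin k → Finset (EuclideanSpace ℝ (Fin d)), IsBalancedPartition P k L U Q →
      ∃ x : (Fin k → Fin (L' + 1)) → Fin k → ℝ,
        (∀ t j, 0 ≤ x t j) ∧
        (∀ t, ∑ j, x t j = (n t : ℝ)) ∧
        (∀ j : Fin k, (L : ℝ) ≤ ∑ t : Fin k → Fin (L' + 1), x t j ∧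
          ∑ t : Fin k → Fin (L' + 1), x t j ≤ (U : ℝ)) ∧
        (∑ t : Fin k → Fin (L' + 1), ∑ j, (1 + ε) ^ (t j : ℕ) * rmin * x t j) ≤
          (1 + ε) * ∑ j, ∑ p ∈ Q j, dist p (c j) :=
  stmt8_general P c ε rmin hε hrmin hlow hhigh L U n hn
end

section
/- Let P be a finite set of points in a metric space and let S = {s_1,...,s_k} be k centers such that assigning each point to its nearest center gives a λ-approximation to the (unconstrained) k-median cost. Then for any partition of P into clusters C_1,...,C_k (in particular a balanced one), choosing for each cluster C_j the center s'_j ∈ S nearest to some designated point of C_j yields Σ_j Σ_{q∈C_j} dist(q, s'_j) ≤ Σ_j Σ_{q∈C_j} (dist(q, c_j) + dist(c_j, p_j) + dist(p_j, s'_j)) where c_j is any center for C_j and p_j ∈ C_j; consequently there exists a k-tuple from S^k inducing a (3λ+2)-approximation of the balanced k-median problem. -/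
/-!
Write `f p` for the distance from `p` to its nearest center in `S`. In each cluster `C j` pick the
point `p` minimising `dist p (copt j) + f p`, and serve the whole cluster by the center of `S`
nearest to `p`. By the triangle inequality through `copt j` and `p`, every `q ∈ C j` then pays at
most `2 * dist q (copt j) + f q`, so the total cost is at most `2 * OPT + ∑ p ∈ P, f p`, which is
at most `(λ + 2) * OPT ≤ (3λ + 2) * OPT` because `λ * OPT ≥ ∑ p ∈ P, f p ≥ 0`.
-/

open Finset Function

lemma Finset.sum_sum_le_sum_of_pairwise_disjoint {ι α : Type*} [Fintype ι] {C : ι → Finset α}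
    {P : Finset α} {f : α → ℝ} (hsub : ∀ j, C j ⊆ P) (hdisj : Pairwise (Disjoint on C))
    (hf : ∀ p, 0 ≤ f p) : ∑ j, ∑ q ∈ C j, f q ≤ ∑ p ∈ P, f p := by
  classical
  rw [← sum_biUnion fun i _ j _ hij => hdisj hij]
  exact sum_le_sum_of_subset_of_nonneg (biUnion_subset.mpr fun j _ => hsub j)
    fun p _ _ => hf p

lemma exists_sum_dist_le_sum_two_mul_dist_add {X ι : Type*} [PseudoMetricSpace X] [Nonempty ι]
    (S : ι → X) (f : X → ℝ) (hf : ∀ p, ∃ i, dist p (S i) ≤ f p) (C : Finset X) (c : X) :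
    ∃ i, ∑ q ∈ C, dist q (S i) ≤ ∑ q ∈ C, (2 * dist q c + f q) := by
  rcases C.eq_empty_or_nonempty with rfl | hC
  · exact ⟨Classical.arbitrary ι, by simp⟩
  obtain ⟨p, -, hp_min⟩ := C.exists_min_image (fun p => dist p c + f p) hC
  obtain ⟨i, hi⟩ := hf p
  refine ⟨i, sum_le_sum fun q hq => ?_⟩
  calc dist q (S i) ≤ dist q c + dist c p + dist p (S i) := dist_triangle4 _ _ _ _
    _ ≤ dist q c + (dist p c + f p) := by rw [dist_comm c p]; linarith
    _ ≤ 2 * dist q c + f q := by linarith [hp_min q hq]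

theorem stmt11_general {X : Type*} [MetricSpace X] {k : ℕ} (hk : 0 < k)
    (P : Finset X)
    (S : Fin k → X) (lam : ℝ)
    (C : Fin k → Finset X) (copt : Fin k → X)
    (hsub : ∀ j, C j ⊆ P)
    (hdisj : ∀ i j, i ≠ j → Disjoint (C i) (C j))
    (hS : ∑ p ∈ P, (Finset.univ.inf' ⟨⟨0, hk⟩, Finset.mem_univ _⟩
        fun j : Fin k => dist p (S j)) ≤
      lam * ∑ j, ∑ p ∈ C j, dist p (copt j)) :
    ∃ s' : Fin k → X, (∀ j, ∃ i, s' j = S i) ∧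
      ∑ j, ∑ q ∈ C j, dist q (s' j) ≤
        (3 * lam + 2) * ∑ j, ∑ p ∈ C j, dist p (copt j) := by
  have : Nonempty (Fin k) := ⟨⟨0, hk⟩⟩
  set f : X → ℝ := fun p => univ.inf' ⟨⟨0, hk⟩, mem_univ _⟩ fun j => dist p (S j)
  set OPT := ∑ j, ∑ p ∈ C j, dist p (copt j)
  have hf_near : ∀ p, ∃ i, dist p (S i) ≤ f p := fun p =>
    let ⟨i, _, hi⟩ := exists_mem_eq_inf' _ fun j => dist p (S j)
    ⟨i, hi.ge⟩
  have hf_nonneg : ∀ p, 0 ≤ f p := fun p => le_inf' _ _ fun _ _ => dist_nonneg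
  choose i hi using fun j => exists_sum_dist_le_sum_two_mul_dist_add S f hf_near (C j) (copt j)
  have hf_sum : ∑ j, ∑ q ∈ C j, f q ≤ lam * OPT :=
    (sum_sum_le_sum_of_pairwise_disjoint hsub hdisj hf_nonneg).trans hS
  have hlamOPT : 0 ≤ lam * OPT :=
    (sum_nonneg fun _ _ => sum_nonneg fun q _ => hf_nonneg q).trans hf_sum
  refine ⟨S ∘ i, fun j => ⟨i j, rfl⟩, ?_⟩
  calc ∑ j, ∑ q ∈ C j, dist q (S (i j))
      ≤ ∑ j, ∑ q ∈ C j, (2 * dist q (copt j) + f q) := sum_le_sum fun j _ => hi j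
    _ = 2 * OPT + ∑ j, ∑ q ∈ C j, f q := by simp only [OPT, sum_add_distrib, mul_sum]
    _ ≤ (3 * lam + 2) * OPT := by linarith

/-- if the centers `S` achieve unconstrained k-median cost at most
`λ` times the cost of the (balanced) optimal solution with clusters `C j` and centers
`copt j`, then some k-tuple of centers drawn from `S` serves the clusters `C j` with
total cost at most `(3λ+2)` times the optimal balanced cost. -/
theorem stmt11 {X : Type*} [MetricSpace X] {k : ℕ} (hk : 0 < k)
    (P : Finset X) (L U : ℕ) (hL : 0 < L) (hLU : L ≤ U)
    (S : Fin k → X) (lam : ℝ) (hlam : 1 ≤ lam)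
    (C : Fin k → Finset X) (copt : Fin k → X)
    (hsub : ∀ j, C j ⊆ P)
    (hdisj : ∀ i j, i ≠ j → Disjoint (C i) (C j))
    (hcover : ∀ p ∈ P, ∃ j, p ∈ C j)
    (hsize : ∀ j, L ≤ (C j).card ∧ (C j).card ≤ U)
    (hS : ∑ p ∈ P, (Finset.univ.inf' ⟨⟨0, hk⟩, Finset.mem_univ _⟩
        fun j : Fin k => dist p (S j)) ≤
      lam * ∑ j, ∑ p ∈ C j, dist p (copt j)) :
    ∃ s' : Fin k → X, (∀ j, ∃ i, s' j = S i) ∧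
      ∑ j, ∑ q ∈ C j, dist q (s' j) ≤
        (3 * lam + 2) * ∑ j, ∑ p ∈ C j, dist p (copt j) :=
  stmt11_general hk P S lam C copt hsub hdisj hS
end

section
/- There exists an instance of balanced k-center (n = 6 collinear points, k = 3, L = U = 2) and a valid run of Gonzalez's algorithm producing S such that every 3-tuple of centers chosen from S³ induces a balanced clustering of radius at least (4 − δ)·r_opt, where δ > 0 can be made arbitrarily small. Concretely: points p_1,...,p_6 on a line with ‖p_1−p_2‖ = ‖p_3−p_4‖ = 2, ‖p_2−p_3‖ = ‖p_4−p_5‖ = 2−δ, p_5 = p_6; the optimal balanced clustering {p_1,p_2},{p_3,p_4},{p_5,p_6} has radius 1, and if Gonzalez starts at p_2 it selects S = {p_2, p_5, p_1}, for which every balanced clustering with centers from S has radius at least 4 − δ. -/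
/-!
Every point except `p₀ = 0` lies at distance at least `2` from it, so whichever point shares
`p₀`'s cluster forces radius `≥ 1`. With centers from `S = (p₁, p₄, p₀)` and radius `< 4 - δ`,
the three points `p₃, p₄, p₅` can only be served by the center `p₄`, while `p₀, p₁, p₂` cannot be.
Then exactly three points lie in clusters whose center is `p₄`; but this number is twice the
number of such clusters.
-/

open Finset

theorem Finset.card_filter_comp_eq_mul {ι κ : Type*} [Fintype ι] [Fintype κ] [DecidableEq κ] (σ : ι → κ)
    {k : ℕ} (hσ : ∀ m, #{i | σ i = m} = k) (P : κ → Prop) [DecidablePred P] :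
    #{i | P (σ i)} = k * #{m | P m} := by
  rw [card_eq_sum_card_fiberwise (t := {m | P m}) (f := σ) fun i => by simp]
  rw [sum_congr rfl fun m hm => ?_, sum_const, smul_eq_mul, mul_comm]
  rw [filter_filter, ← hσ m]
  congr 1
  exact filter_congr fun i _ => by simp_all

theorem le_dist_or_le_dist_of_two_mul_le_dist {X : Type*} [PseudoMetricSpace X] {x y : X} {r : ℝ}
    (h : 2 * r ≤ dist x y) (c : X) : r ≤ dist x c ∨ r ≤ dist y c := by
  by_contra! hlt
  linarith [dist_triangle_right x y c]

namespace GonzalezTightExample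

def point (δ : ℝ) : Fin 6 → ℝ := ![0, 2, 4 - δ, 6 - δ, 8 - 2 * δ, 8 - 2 * δ]

def run (δ : ℝ) : Fin 3 → ℝ := ![point δ 1, point δ 4, point δ 0]

variable {δ : ℝ}

theorem two_le_dist_point_zero (hδ : δ < 1) {j : Fin 6} (hj : j ≠ 0) :
    2 ≤ dist (point δ 0) (point δ j) := by
  fin_cases j <;> simp_all [point, Real.dist_eq] <;> grind

theorem eq_one_iff_of_dist_run_lt (hδ : δ < 1) {i : Fin 6} {x : Fin 3}
    (h : dist (point δ i) (run δ x) < 4 - δ) : x = 1 ↔ 3 ≤ i := by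
  fin_cases i <;> fin_cases x <;> simp_all [point, run, Real.dist_eq] <;> grind

theorem dist_point_le_dist_point_four (hδ : δ < 1) (i : Fin 6) :
    dist (point δ i) (point δ 1) ≤ dist (point δ 4) (point δ 1) := by
  fin_cases i <;> simp [point, Real.dist_eq] <;> grind

theorem min_dist_point_le_min_dist_point_zero (hδ0 : 0 < δ) (hδ1 : δ < 1) (i : Fin 6) :
    min (dist (point δ i) (point δ 1)) (dist (point δ i) (point δ 4)) ≤
      min (dist (point δ 0) (point δ 1)) (dist (point δ 0) (point δ 4)) := by
  fin_cases i <;> simp [point, Real.dist_eq] <;> grind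

theorem exists_balanced_radius_le_one :
    ∃ σ : Fin 6 → Fin 3, (∀ m, #{i | σ i = m} = 2) ∧
      ∃ c : Fin 3 → ℝ, ∀ i, dist (point δ i) (c (σ i)) ≤ 1 := by
  refine ⟨![0, 0, 1, 1, 2, 2], by decide, ![1, 5 - δ, 8 - 2 * δ], fun i => ?_⟩
  fin_cases i <;> norm_num [point, Real.dist_eq, Matrix.cons_val_two]

theorem exists_one_le_dist_center {σ : Fin 6 → Fin 3} (hσ : ∀ m, #{i | σ i = m} = 2) (hδ : δ < 1)
    (c : Fin 3 → ℝ) : ∃ i, 1 ≤ dist (point δ i) (c (σ i)) := by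
  obtain ⟨j, hj, hj0⟩ := exists_mem_ne (s := {i | σ i = σ 0}) (by rw [hσ]; norm_num) 0
  have hfar : 2 * 1 ≤ dist (point δ 0) (point δ j) := by
    linarith [two_le_dist_point_zero hδ hj0]
  rcases le_dist_or_le_dist_of_two_mul_le_dist hfar (c (σ 0)) with h | h
  · exact ⟨0, h⟩
  · exact ⟨j, (mem_filter.1 hj).2 ▸ h⟩

theorem exists_four_sub_le_dist_run {σ : Fin 6 → Fin 3} (hσ : ∀ m, #{i | σ i = m} = 2)
    (hδ : δ < 1) (c : Fin 3 → Fin 3) : ∃ i, 4 - δ ≤ dist (point δ i) (run δ (c (σ i))) := by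
  by_contra! hnear
  have hserved : ({i | c (σ i) = 1} : Finset (Fin 6)) = {3, 4, 5} := by
    ext i
    rw [mem_filter, eq_one_iff_of_dist_run_lt hδ (hnear i)]
    fin_cases i <;> simp
  have hcard := card_filter_comp_eq_mul σ hσ (c · = 1)
  rw [hserved, show #({3, 4, 5} : Finset (Fin 6)) = 3 by decide] at hcard
  omega

end GonzalezTightExample

open GonzalezTightExample in
/-- the 6-point collinear instance showing the factor 4 is tight.
Points `0, 2, 4-δ, 6-δ, 8-2δ, 8-2δ` with `k = 3`, `L = U = 2`:
(a) there is a balanced clustering of radius `1`;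
(b) every balanced clustering (with arbitrary real centers) has radius `≥ 1` (so `r_opt = 1`);
(c) `S = (p 1, p 4, p 0)` is a valid run of Gonzalez's algorithm starting at `p 1`;
(d) every balanced clustering whose centers are chosen from `S` has radius `≥ 4 - δ`. -/
theorem stmt13 (δ : ℝ) (hδ0 : 0 < δ) (hδ1 : δ < 1) :
    let p : Fin 6 → ℝ := ![0, 2, 4 - δ, 6 - δ, 8 - 2 * δ, 8 - 2 * δ]
    let S : Fin 3 → ℝ := ![p 1, p 4, p 0]
    -- (a) radius 1 is feasible
    (∃ σ : Fin 6 → Fin 3, (∀ m, (Finset.univ.filter fun i => σ i = m).card = 2) ∧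
        ∃ c : Fin 3 → ℝ, ∀ i, dist (p i) (c (σ i)) ≤ 1) ∧
    -- (b) no balanced clustering has radius < 1
    (∀ σ : Fin 6 → Fin 3, (∀ m, (Finset.univ.filter fun i => σ i = m).card = 2) →
        ∀ c : Fin 3 → ℝ, ∃ i, 1 ≤ dist (p i) (c (σ i))) ∧
    -- (c) `S` is a valid Gonzalez run starting at `p 1`
    (∀ i, dist (p i) (p 1) ≤ dist (p 4) (p 1)) ∧
    (∀ i, min (dist (p i) (p 1)) (dist (p i) (p 4)) ≤
          min (dist (p 0) (p 1)) (dist (p 0) (p 4))) ∧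
    -- (d) every balanced clustering with centers from `S³` has radius ≥ 4 - δ
    (∀ σ : Fin 6 → Fin 3, (∀ m, (Finset.univ.filter fun i => σ i = m).card = 2) →
        ∀ c : Fin 3 → Fin 3, ∃ i, 4 - δ ≤ dist (p i) (S (c (σ i)))) := by
  intro p S
  exact ⟨exists_balanced_radius_le_one,
    fun σ hσ c => exists_one_le_dist_center hσ hδ1 c, dist_point_le_dist_point_four hδ1,
    min_dist_point_le_min_dist_point_zero hδ0 hδ1, fun σ hσ c => exists_four_sub_le_dist_run hσ hδ1 c⟩
end

section
/- There exists an instance of balanced k-center where restricting the cluster centers to be exactly the set S output by Gonzalez's algorithm (one center per selected point, rather than allowing repetitions via the Cartesian product S^k) yields an unboundedly bad approximation ratio: for the 6-point planar instance with p_1 = p_2, p_3 = p_4 at vertical distance l, and p_5, p_6 at vertical distance 2r on a line at horizontal distance h with l < 2r ≪ h, the optimal balanced radius (L = U = 2, k = 3) is r, but using centers {p_1, p_5, p_6} forces some cluster of radius at least h, giving ratio ≥ h/r which is unbounded. -/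
/-!
The optimum pairs the six points as they lie: `{p 1, p 2}`, `{p 3, p 4}` and `{p 5, p 6}`, the
last one centered at the midpoint `(h, r)`, so its radius is `r`. With the centers `S` used
bijectively, only one cluster is centered on the line `x = 0`, and it holds just two of the four
points `p 1, …, p 4` lying on that line; any of the other two is served by a center on the line
`x = h`, hence at distance at least `h`.
-/

open Finset

abbrev planePoint (x y : ℝ) : EuclideanSpace ℝ (Fin 2) :=
  (WithLp.equiv 2 (Fin 2 → ℝ)).symm ![x, y]

lemma dist_planePoint_planePoint_of_fst_eq (x y y' : ℝ) :
    dist (planePoint x y) (planePoint x y') = |y - y'| := by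
  simp [EuclideanSpace.dist_eq, Fin.sum_univ_two, Real.dist_eq, Real.sqrt_sq_eq_abs]

lemma abs_sub_fst_le_dist_planePoint (x y x' y' : ℝ) :
    |x - x'| ≤ dist (planePoint x y) (planePoint x' y') := by
  simpa [Real.dist_eq] using PiLp.dist_apply_le (planePoint x y) (planePoint x' y') 0

lemma exists_mem_map_ne_of_card_fiber_lt {α β : Type*} [Fintype α] [DecidableEq β]
    (σ : α → β) (m : β) (s : Finset α) (hs : #(univ.filter fun i => σ i = m) < #s) :
    ∃ i ∈ s, σ i ≠ m := by
  by_contra! hfiber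
  have : s ⊆ univ.filter fun i => σ i = m := fun i hi => by simpa using hfiber i hi
  exact (card_le_card this).not_gt hs

theorem stmt14_general (l r h : ℝ) (hl : 0 < l) (hlr : l < 2 * r) :
    let pt : ℝ → ℝ → EuclideanSpace ℝ (Fin 2) :=
      fun x y => (WithLp.equiv 2 (Fin 2 → ℝ)).symm ![x, y]
    let p : Fin 6 → EuclideanSpace ℝ (Fin 2) :=
      ![pt 0 l, pt 0 l, pt 0 0, pt 0 0, pt h 0, pt h (2 * r)]
    let S : Fin 3 → EuclideanSpace ℝ (Fin 2) := ![p 0, p 4, p 5]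
    -- the optimum has radius at most r
    (∃ σ : Fin 6 → Fin 3, (∀ m, (Finset.univ.filter fun i => σ i = m).card = 2) ∧
        ∃ c : Fin 3 → EuclideanSpace ℝ (Fin 2), ∀ i, dist (p i) (c (σ i)) ≤ r) ∧
    -- but with the centers of S used bijectively, some point is at distance ≥ h
    (∀ σ : Fin 6 → Fin 3, (∀ m, (Finset.univ.filter fun i => σ i = m).card = 2) →
        ∀ e : Equiv.Perm (Fin 3), ∃ i, h ≤ dist (p i) (S (e (σ i)))) := by
  intro pt p S
  refine ⟨⟨![0, 0, 1, 1, 2, 2], fun m => by fin_cases m <;> decide,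
    ![planePoint 0 l, planePoint 0 0, planePoint h r], fun i => ?_⟩, fun σ hcard e => ?_⟩
  · fin_cases i <;> refine (dist_planePoint_planePoint_of_fst_eq _ _ _).trans_le ?_ <;>
      rw [abs_le] <;> constructor <;> linarith
  · obtain ⟨i, hi, hσi⟩ := exists_mem_map_ne_of_card_fiber_lt σ (e.symm 0) {0, 1, 2, 3}
      (by rw [hcard]; decide)
    have he : e (σ i) ≠ 0 := fun h0 => hσi (e.eq_symm_apply.mpr h0)
    refine ⟨i, (show h ≤ |0 - h| by simp [le_abs_self]).trans ?_⟩
    simp only [mem_insert, mem_singleton] at hi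
    generalize e (σ i) = j at he
    rcases hi with rfl | rfl | rfl | rfl <;> fin_cases j <;> first
      | exact absurd rfl he
      | exact abs_sub_fst_le_dist_planePoint _ _ _ _

/-- the planar instance showing that restricting the centers to be exactly
the Gonzalez set `S = {p 1, p 5, p 6}` (one center per selected point, no repetitions) is
unboundedly bad. Points `p 1 = p 2 = (0, l)`, `p 3 = p 4 = (0, 0)`, `p 5 = (h, 0)`,
`p 6 = (h, 2r)` with `0 < l < 2r < h`, `k = 3`, `L = U = 2`: the optimal balanced radius
is at most `r`, but every balanced clustering using exactly the three centers of `S`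
(assigned bijectively to the clusters) has some point at distance at least `h` from its
center, giving ratio at least `h / r`. -/
theorem stmt14 (l r h : ℝ) (hl : 0 < l) (hlr : l < 2 * r) (hrh : 2 * r < h) :
    let pt : ℝ → ℝ → EuclideanSpace ℝ (Fin 2) :=
      fun x y => (WithLp.equiv 2 (Fin 2 → ℝ)).symm ![x, y]
    let p : Fin 6 → EuclideanSpace ℝ (Fin 2) :=
      ![pt 0 l, pt 0 l, pt 0 0, pt 0 0, pt h 0, pt h (2 * r)]
    let S : Fin 3 → EuclideanSpace ℝ (Fin 2) := ![p 0, p 4, p 5]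
    -- the optimum has radius at most r
    (∃ σ : Fin 6 → Fin 3, (∀ m, (Finset.univ.filter fun i => σ i = m).card = 2) ∧
        ∃ c : Fin 3 → EuclideanSpace ℝ (Fin 2), ∀ i, dist (p i) (c (σ i)) ≤ r) ∧
    -- but with the centers of S used bijectively, some point is at distance ≥ h
    (∀ σ : Fin 6 → Fin 3, (∀ m, (Finset.univ.filter fun i => σ i = m).card = 2) →
        ∀ e : Equiv.Perm (Fin 3), ∃ i, h ≤ dist (p i) (S (e (σ i)))) :=
  stmt14_general l r h hl hlr
end

section
/- Let x be an optimal solution of the transportation LP (minimize Σ c_e x_e with exact integer left supplies and right column sums in [L,U]) and suppose the fractional-support subgraph is a path v_{B_1}, v_{R_1}, v_{B_2}, ..., v_{R_{h-1}}, v_{B_h} with both endpoints on the right side, where the total flows m_1 through v_{B_1} and m_h through v_{B_h} are non-integral. Then L < m_1 and m_h < U, so δ = min({m_1 − L, U − m_h} ∪ {fractional gaps of the path variables}) is strictly positive and augmenting by ±δ along the path preserves feasibility while making at least one more variable integral. -/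
def Feasible {A B : Type*} [Fintype A] [Fintype B] (n : A → ℕ) (L U : ℕ)
    (x : A → B → ℝ) : Prop :=
  (∀ a b, 0 ≤ x a b) ∧ (∀ a, ∑ b, x a b = (n a : ℝ)) ∧
  (∀ b, (L : ℝ) ≤ ∑ a, x a b ∧ ∑ a, x a b ≤ (U : ℝ))

section NotInt

variable {R : Type*} [AddGroupWithOne R] [PartialOrder R] {r : R}

theorem natCast_lt_of_le_of_not_int {k : ℕ} (hle : (k : R) ≤ r) (hr : ¬ ∃ m : ℤ, r = m) :
    (k : R) < r :=
  hle.lt_of_ne fun h => hr ⟨k, by rw [← h, Int.cast_natCast]⟩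

theorem lt_natCast_of_le_of_not_int {k : ℕ} (hle : r ≤ k) (hr : ¬ ∃ m : ℤ, r = m) :
    r < k :=
  hle.lt_of_ne fun h => hr ⟨k, by rw [h, Int.cast_natCast]⟩

end NotInt

theorem Feasible.colSum_mem_Ioo_of_not_int {A B : Type*} [Fintype A] [Fintype B]
    {n : A → ℕ} {L U : ℕ} {x : A → B → ℝ} (hx : Feasible n L U x) {b : B}
    (hb : ¬ ∃ m : ℤ, ∑ a, x a b = m) :
    ∑ a, x a b ∈ Set.Ioo (L : ℝ) U :=
  ⟨natCast_lt_of_le_of_not_int (hx.2.2 b).1 hb, lt_natCast_of_le_of_not_int (hx.2.2 b).2 hb⟩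

theorem stmt18 {A B : Type*} [Fintype A] [Fintype B]
    (n : A → ℕ) (L U : ℕ) (x : A → B → ℝ)
    (hfeas : Feasible n L U x)
    {h : ℕ} (hh : 2 ≤ h) (b : Fin h → B)
    (hm1 : ¬ ∃ m : ℤ, ∑ a', x a' (b ⟨0, by omega⟩) = (m : ℝ))
    (hmh : ¬ ∃ m : ℤ, ∑ a', x a' (b ⟨h - 1, by omega⟩) = (m : ℝ)) :
    (L : ℝ) < ∑ a', x a' (b ⟨0, by omega⟩) ∧
    (∑ a', x a' (b ⟨h - 1, by omega⟩)) < (U : ℝ) ∧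
    0 < min ((∑ a', x a' (b ⟨0, by omega⟩)) - (L : ℝ))
            ((U : ℝ) - ∑ a', x a' (b ⟨h - 1, by omega⟩)) := by
  obtain ⟨hL, -⟩ := hfeas.colSum_mem_Ioo_of_not_int hm1
  obtain ⟨-, hU⟩ := hfeas.colSum_mem_Ioo_of_not_int hmh
  exact ⟨hL, hU, lt_min (sub_pos.2 hL) (sub_pos.2 hU)⟩
end
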